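/- arXiv:0709.0306 — 2 statements merged into one kernel-verified Lean document; each statement's English description precedes it below -/
import Mathlib

section
/- Let $W:\mathbb{R}\to\mathbb{R}$ be strictly increasing and right-continuous with $W(0)=0$, and let $f:\mathbb{R}\to\mathbb{R}$ be right-continuous and $h:\mathbb{R}\to\mathbb{R}$ be continuous. Then the following are equivalent: (i) for every $x\in\mathbb{R}$, the limit $\lim_{\epsilon\to 0}\frac{f(x+\epsilon)-f(x)}{W(x+\epsilon)-W(x)}$ exists and equals $h(x)$; (ii) for all $a<b$, $f(b)-f(a) = \int_{(a,b]} h(y)\, dW(y)$, where $dW$ denotes the Lebesgue–Stieltjes measure associated to $W$. -/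
open MeasureTheory Filter Topology Set

/-!
If `f b - f a = ∫_(a,b] h dW`, then `(f (x + ε) - f x) / (W (x + ε) - W x)` is an average of `h`
over the interval between `x` and `x + ε`, hence close to `h x` by continuity. Conversely, the
first part applies to `F x = ∫_0^x h dW`, so `g = f - F` has `dg/dW = 0`: near every point
`|g y - g x| ≤ ε |W y - W x|`, and a supremum argument propagates this local bound to
`|g b - g a| ≤ ε (W b - W a)` for every `ε > 0`, i.e. `g` is constant.
-/

def HasStieltjesDerivAt (W f : ℝ → ℝ) (f' x : ℝ) : Prop :=
  Tendsto (fun ε : ℝ => (f (x + ε) - f x) / (W (x + ε) - W x)) (𝓝[≠] 0) (𝓝 f')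

theorem abs_sub_le_sub_of_eventually_abs_sub_le {g V : ℝ → ℝ} (hV : Monotone V)
    (hloc : ∀ x, ∀ᶠ y in 𝓝 x, |g y - g x| ≤ |V y - V x|) {a b : ℝ} (hab : a ≤ b) :
    |g b - g a| ≤ V b - V a := by
  set T := {x | |g x - g a| ≤ V x - V a}
  have extend : ∀ x y, x ∈ T → |g y - g x| ≤ V y - V x → y ∈ T := fun x y hx hxy =>
    calc |g y - g a| ≤ |g y - g x| + |g x - g a| := abs_sub_le _ _ _
      _ ≤ (V y - V x) + (V x - V a) := add_le_add hxy hx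
      _ = V y - V a := by ring
  have haT : a ∈ T ∩ Icc a b := ⟨by simp [T], left_mem_Icc.2 hab⟩
  obtain ⟨c, hc⟩ : ∃ c, IsLUB (T ∩ Icc a b) c :=
    ⟨_, isLUB_csSup ⟨a, haT⟩ ⟨b, fun x hx => hx.2.2⟩⟩
  have hcIcc : c ∈ Icc a b := ⟨hc.1 haT, hc.2 fun x hx => hx.2.2⟩
  have hcT : c ∈ T := by
    obtain ⟨x, hxc, hxT⟩ := (((hloc c).filter_mono nhdsWithin_le_nhds).and_frequently
      (hc.frequently_mem ⟨a, haT⟩)).exists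
    refine extend x c hxT.1 ?_
    rwa [abs_sub_comm, abs_sub_comm (V x), abs_of_nonneg (sub_nonneg.2 (hV (hc.1 hxT)))] at hxc
  obtain rfl | hcb := hcIcc.2.eq_or_lt
  · exact hcT
  obtain ⟨y, hyc, hcy, hyb⟩ :=
    (((hloc c).filter_mono nhdsWithin_le_nhds).and (Ioc_mem_nhdsGT hcb)).exists
  rw [abs_of_nonneg (sub_nonneg.2 (hV hcy.le))] at hyc
  have hyT : y ∈ T ∩ Icc a b := ⟨extend c y hcT hyc, hcIcc.1.trans hcy.le, hyb⟩
  exact absurd (hc.1 hyT) hcy.not_ge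

namespace HasStieltjesDerivAt

variable {W f g : ℝ → ℝ} {f' g' x : ℝ}

theorem sub (hf : HasStieltjesDerivAt W f f' x) (hg : HasStieltjesDerivAt W g g' x) :
    HasStieltjesDerivAt W (f - g) (f' - g') x := by
  refine (Tendsto.sub hf hg).congr fun ε => ?_
  simp only [Pi.sub_apply]
  ring

theorem eventually_abs_sub_le (hW : StrictMono W) (hg : HasStieltjesDerivAt W g 0 x) {ε : ℝ}
    (hε : 0 < ε) : ∀ᶠ y in 𝓝 x, |g y - g x| ≤ ε * |W y - W x| := by
  have hlo : (fun z => g (x + z) - g x) =o[𝓝[≠] 0] fun z => W (x + z) - W x := by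
    refine (Asymptotics.isLittleO_iff_tendsto'
      (eventually_nhdsWithin_of_forall fun z hz hWz => ?_)).2 hg
    exact absurd hWz (sub_ne_zero.2 (hW.injective.ne (by simpa using hz)))
  have hnhds : ∀ᶠ z in 𝓝 0, |g (x + z) - g x| ≤ ε * |W (x + z) - W x| := by
    filter_upwards [eventually_nhdsWithin_iff.1 (hlo.def hε)] with z hz
    rcases eq_or_ne z 0 with rfl | hz0
    · simp
    · simpa only [Real.norm_eq_abs] using hz hz0
  have hshift : Tendsto (fun y => y - x) (𝓝 x) (𝓝 0) :=
    (continuous_sub_right x).tendsto' x 0 (sub_self x)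
  filter_upwards [hshift.eventually hnhds] with y hy
  rwa [add_sub_cancel] at hy

end HasStieltjesDerivAt

theorem eq_of_forall_hasStieltjesDerivAt_zero {W g : ℝ → ℝ} (hW : StrictMono W)
    (hg : ∀ x, HasStieltjesDerivAt W g 0 x) (a b : ℝ) : g a = g b := by
  wlog hab : a ≤ b generalizing a b
  · exact (this b a (le_of_not_ge hab)).symm
  have hbound : ∀ ε > 0, |g b - g a| ≤ ε * (W b - W a) := fun ε hε => by
    rw [mul_sub]
    refine abs_sub_le_sub_of_eventually_abs_sub_le (hW.monotone.const_mul hε.le) (fun x => ?_) hab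
    filter_upwards [(hg x).eventually_abs_sub_le hW hε] with y hy
    rwa [← mul_sub, abs_mul, abs_of_pos hε]
  have hlim : Tendsto (fun ε : ℝ => ε * (W b - W a)) (𝓝[>] 0) (𝓝 0) :=
    tendsto_nhdsWithin_of_tendsto_nhds ((continuous_mul_const _).tendsto' 0 0 (zero_mul _))
  have hzero : |g b - g a| ≤ 0 := ge_of_tendsto hlim (eventually_nhdsWithin_of_forall hbound)
  exact (sub_eq_zero.1 (abs_nonpos_iff.1 hzero)).symm

namespace StieltjesFunction

variable (W : StieltjesFunction ℝ)

theorem measureReal_Ioc {a b : ℝ} (hab : a ≤ b) : W.measure.real (Ioc a b) = W b - W a := by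
  rw [measureReal_def, W.measure_Ioc, ENNReal.toReal_ofReal (sub_nonneg.2 (W.mono hab))]

theorem abs_setIntegral_Ioc_div_sub_le {h : ℝ → ℝ} {a b c δ : ℝ} (hab : W a < W b)
    (hint : IntegrableOn h (Ioc a b) W.measure) (hδ : ∀ t ∈ Ioc a b, |h t - c| ≤ δ) :
    |(∫ y in Ioc a b, h y ∂W.measure) / (W b - W a) - c| ≤ δ := by
  have hpos : 0 < W b - W a := sub_pos.2 hab
  have hreal : W.measure.real (Ioc a b) = W b - W a :=
    W.measureReal_Ioc (W.mono.reflect_lt hab).le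
  have hsub : ∫ y in Ioc a b, (h y - c) ∂W.measure
      = (∫ y in Ioc a b, h y ∂W.measure) - (W b - W a) * c := by
    rw [integral_sub hint (integrableOn_const measure_Ioc_lt_top.ne), setIntegral_const, hreal,
      smul_eq_mul]
  have hle : |∫ y in Ioc a b, (h y - c) ∂W.measure| ≤ δ * (W b - W a) := by
    simpa only [Real.norm_eq_abs, hreal] using
      norm_setIntegral_le_of_norm_le_const (f := fun y => h y - c) (μ := W.measure)
        measure_Ioc_lt_top hδ
  rw [div_sub' hpos.ne', abs_div, abs_of_pos hpos, div_le_iff₀ hpos, ← hsub]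
  exact hle

variable {W}

theorem abs_div_sub_le_of_integral (hW : StrictMono W) {F h : ℝ → ℝ}
    (hint : LocallyIntegrable h W.measure)
    (hF : ∀ a b, a < b → F b - F a = ∫ y in Ioc a b, h y ∂W.measure) {a b c δ : ℝ}
    (hab : a ≠ b) (hδ : ∀ t ∈ uIcc a b, |h t - c| ≤ δ) :
    |(F b - F a) / (W b - W a) - c| ≤ δ := by
  wlog hlt : a < b generalizing a b
  · have := this hab.symm (by rwa [uIcc_comm]) (hab.lt_or_gt.resolve_left hlt)
    rwa [← neg_sub (F a), ← neg_sub (W a), neg_div_neg_eq]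
  rw [hF a b hlt]
  exact W.abs_setIntegral_Ioc_div_sub_le (hW hlt)
    ((hint.integrableOn_isCompact isCompact_Icc).mono_set Ioc_subset_Icc_self)
    fun t ht => hδ t (Icc_subset_uIcc (Ioc_subset_Icc_self ht))

theorem hasStieltjesDerivAt_of_integral (hW : StrictMono W) {F h : ℝ → ℝ}
    (hint : LocallyIntegrable h W.measure)
    (hF : ∀ a b, a < b → F b - F a = ∫ y in Ioc a b, h y ∂W.measure) {x : ℝ}
    (hx : ContinuousAt h x) : HasStieltjesDerivAt W F (h x) x := by
  refine Metric.tendsto_nhds.2 fun δ hδ => ?_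
  obtain ⟨η, hη, hclose⟩ := Metric.continuousAt_iff.1 hx (δ / 2) (half_pos hδ)
  filter_upwards [self_mem_nhdsWithin, nhdsWithin_le_nhds (Metric.ball_mem_nhds 0 hη)]
    with ε hε0 hεη
  have hslope := abs_div_sub_le_of_integral hW hint hF (a := x) (b := x + ε) (c := h x)
    (δ := δ / 2) (by simpa using hε0) fun t ht => by
      rw [← Real.dist_eq]
      refine (hclose ?_).le
      calc dist t x = |t - x| := Real.dist_eq t x
        _ ≤ |x + ε - x| := abs_sub_left_of_mem_uIcc ht
        _ < η := by simpa using hεη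
  rw [Real.dist_eq]
  linarith

end StieltjesFunction

theorem stmt_1_general (W : StieltjesFunction ℝ) (hW : StrictMono W)
    (f h : ℝ → ℝ)
    (hh : Continuous h) :
    (∀ x : ℝ, Tendsto (fun ε : ℝ => (f (x + ε) - f x) / (W (x + ε) - W x))
        (𝓝[≠] 0) (𝓝 (h x)))
      ↔ (∀ a b : ℝ, a < b → f b - f a = ∫ y in Set.Ioc a b, h y ∂W.measure) := by
  have hint : LocallyIntegrable h W.measure := hh.locallyIntegrable
  refine ⟨fun hf a b hab => ?_, fun hf x =>
    StieltjesFunction.hasStieltjesDerivAt_of_integral hW hint hf hh.continuousAt⟩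
  set F : ℝ → ℝ := fun x => ∫ t in (0 : ℝ)..x, h t ∂W.measure
  have hF : ∀ a b, a < b → F b - F a = ∫ y in Ioc a b, h y ∂W.measure := fun a b hab => by
    rw [intervalIntegral.integral_interval_sub_left (hh.intervalIntegrable _ _)
      (hh.intervalIntegrable _ _), intervalIntegral.integral_of_le hab.le]
  have hconst := eq_of_forall_hasStieltjesDerivAt_zero hW (g := f - F) (fun x => by
    simpa using HasStieltjesDerivAt.sub (hf x)
      (StieltjesFunction.hasStieltjesDerivAt_of_integral hW hint hF hh.continuousAt)) a b
  simp only [Pi.sub_apply] at hconst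
  linarith [hF a b hab]

/-- Equivalence between the generalized derivative `df/dW = h` (pointwise two-sided limit)
and the Stieltjes integral identity `f b - f a = ∫_(a,b] h dW`, for `W` strictly increasing
right continuous with `W 0 = 0`, `f` right continuous and `h` continuous. -/
theorem stmt_1 (W : StieltjesFunction ℝ) (hW : StrictMono W) (hW0 : W 0 = 0)
    (f h : ℝ → ℝ)
    (hf : ∀ x, ContinuousWithinAt f (Set.Ici x) x)
    (hh : Continuous h) :
    (∀ x : ℝ, Tendsto (fun ε : ℝ => (f (x + ε) - f x) / (W (x + ε) - W x))
        (𝓝[≠] 0) (𝓝 (h x)))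
      ↔ (∀ a b : ℝ, a < b → f b - f a = ∫ y in Set.Ioc a b, h y ∂W.measure) :=
  stmt_1_general W hW f h hh
end

section
/- Let $W:\mathbb{R}\to\mathbb{R}$ be a strictly increasing càdlàg function whose set of jump points $\mathbb{D}(W)$ is dense in $\mathbb{R}$. If $f:\mathbb{R}\to\mathbb{R}$ is continuous, the generalized derivative $\frac{df}{dW}(x) = \lim_{\epsilon\to 0}\frac{f(x+\epsilon)-f(x)}{W(x+\epsilon)-W(x)}$ exists for every $x$, and $x \mapsto \frac{df}{dW}(x)$ is differentiable with continuous derivative, then $f$ is constant. -/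
/-!
At a jump point `x` of `W` the denominator `W y - W x` tends to `leftLim W x - W x ≠ 0` as
`y ↑ x` while the numerator tends to `0`, so `df/dW` vanishes on the dense set of jumps and,
being continuous, everywhere. If `df/dW ≥ 0`, then `f + δ W` is nondecreasing near every point,
hence globally, for each `δ > 0`; letting `δ → 0` and applying this to `f` and `-f` shows that
`f` is constant.
-/

open Filter Topology

theorem monotone_of_eventually_le {α β : Type*} [ConditionallyCompleteLinearOrder α]
    [TopologicalSpace α] [OrderTopology α] [DenselyOrdered α] [Preorder β] {h : α → β}
    (hr : ∀ x, ∀ᶠ y in 𝓝[>] x, h x ≤ h y) (hl : ∀ x, ∀ᶠ y in 𝓝[<] x, h y ≤ h x) :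
    Monotone h := by
  intro a b hab
  set S := {x | x ∈ Set.Icc a b ∧ h a ≤ h x}
  have haS : a ∈ S := ⟨⟨le_rfl, hab⟩, le_rfl⟩
  obtain ⟨c, hS⟩ : ∃ c, IsLUB S c := ⟨sSup S, isLUB_csSup ⟨a, haS⟩ ⟨b, fun x hx => hx.1.2⟩⟩
  have hac : a ≤ c := hS.1 haS
  have hc : h a ≤ h c := by
    rcases hac.eq_or_lt with rfl | hac
    · exact le_rfl
    obtain ⟨l, hlc, hl⟩ := (mem_nhdsLT_iff_exists_Ioo_subset' hac).1 (hl c)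
    obtain ⟨x, hxS, hlx, hxc⟩ := hS.exists_between (max_lt hlc hac)
    rcases hxc.eq_or_lt with rfl | hxc
    · exact hxS.2
    · exact hxS.2.trans (hl ⟨(le_max_left _ _).trans_lt hlx, hxc⟩)
  rcases (hS.2 fun x hx => hx.1.2 : c ≤ b).eq_or_lt with rfl | hcb
  · exact hc
  obtain ⟨u, hcu, hu⟩ := (mem_nhdsGT_iff_exists_Ioo_subset' hcb).1 (hr c)
  obtain ⟨y, hcy, hyu⟩ := exists_between (lt_min hcu hcb)
  have hyS : y ∈ S :=
    ⟨⟨hac.trans hcy.le, hyu.le.trans (min_le_right _ _)⟩,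
      hc.trans (hu ⟨hcy, hyu.trans_le (min_le_left _ _)⟩)⟩
  exact ((hS.1 hyS).not_gt hcy).elim

/-- The generalized derivative `(df/dW)(x)` exists and equals `L`. -/
def HasDerivWRTAt (W f : ℝ → ℝ) (L x : ℝ) : Prop :=
  Tendsto (fun y => (f y - f x) / (W y - W x)) (𝓝[≠] x) (𝓝 L)

theorem hasDerivWRTAt_iff_tendsto_add {W f : ℝ → ℝ} {L x : ℝ} :
    HasDerivWRTAt W f L x ↔
      Tendsto (fun ε => (f (x + ε) - f x) / (W (x + ε) - W x)) (𝓝[≠] 0) (𝓝 L) := by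
  have hmap : map (x + ·) (𝓝[≠] 0) = 𝓝[≠] x := by simp
  rw [HasDerivWRTAt, ← hmap, tendsto_map'_iff]
  rfl

theorem HasDerivWRTAt.neg {W f : ℝ → ℝ} {L x : ℝ} (h : HasDerivWRTAt W f L x) :
    HasDerivWRTAt W (-f) (-L) x := by
  simpa only [HasDerivWRTAt, Pi.neg_apply, ← neg_sub', neg_div] using Tendsto.neg h

theorem HasDerivWRTAt.eq_zero_of_leftLim_ne {W f : ℝ → ℝ} {L x : ℝ} (h : HasDerivWRTAt W f L x)
    (hW : Monotone W) (hf : ContinuousAt f x) (hx : Function.leftLim W x ≠ W x) : L = 0 := by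
  have hleft : Tendsto (fun y => (f y - f x) / (W y - W x)) (𝓝[<] x)
      (𝓝 ((f x - f x) / (Function.leftLim W x - W x))) :=
    ((hf.tendsto.mono_left nhdsWithin_le_nhds).sub_const _).div
      ((hW.tendsto_leftLim x).sub_const _) (sub_ne_zero.2 hx)
  rw [sub_self, zero_div] at hleft
  have hleft_le : 𝓝[<] x ≤ 𝓝[≠] x := nhdsWithin_mono x fun _ hy => ne_of_lt hy
  exact tendsto_nhds_unique (h.mono_left hleft_le) hleft

theorem monotone_add_mul_of_hasDerivWRTAt {W f f' : ℝ → ℝ} {δ : ℝ} (hW : StrictMono W)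
    (hf : ∀ x, HasDerivWRTAt W f (f' x) x) (hf' : ∀ x, -δ < f' x) :
    Monotone fun x => f x + δ * W x := by
  refine monotone_of_eventually_le (fun x => ?_) (fun x => ?_) <;>
    have hslope := (hf x).eventually (lt_mem_nhds (hf' x))
  · filter_upwards [hslope.filter_mono (nhdsWithin_mono x fun _ hy => ne_of_gt hy),
      self_mem_nhdsWithin] with y hy (hxy : x < y)
    rw [lt_div_iff₀ (sub_pos.2 (hW hxy))] at hy
    linarith
  · filter_upwards [hslope.filter_mono (nhdsWithin_mono x fun _ hy => ne_of_lt hy),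
      self_mem_nhdsWithin] with y hy (hyx : y < x)
    rw [lt_div_iff_of_neg (sub_neg.2 (hW hyx))] at hy
    linarith

theorem monotone_of_hasDerivWRTAt_nonneg {W f f' : ℝ → ℝ} (hW : StrictMono W)
    (hf : ∀ x, HasDerivWRTAt W f (f' x) x) (hf' : ∀ x, 0 ≤ f' x) : Monotone f := by
  intro a b hab
  have hlim : ∀ c, Tendsto (fun δ => f c + δ * W c) (𝓝[>] 0) (𝓝 (f c)) := fun c => by
    simpa using ((continuous_mul_const (W c)).const_add (f c)).tendsto 0 |>.mono_left
      nhdsWithin_le_nhds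
  refine le_of_tendsto_of_tendsto (hlim a) (hlim b) ?_
  filter_upwards [self_mem_nhdsWithin] with δ (hδ : 0 < δ)
  exact monotone_add_mul_of_hasDerivWRTAt hW hf (fun x => by linarith [hf' x]) hab

theorem eq_of_hasDerivWRTAt_zero {W f : ℝ → ℝ} (hW : StrictMono W)
    (hf : ∀ x, HasDerivWRTAt W f 0 x) (x y : ℝ) : f x = f y := by
  have hmono := monotone_of_hasDerivWRTAt_nonneg hW hf fun _ => le_rfl
  have hanti := monotone_of_hasDerivWRTAt_nonneg hW (fun x => by simpa using (hf x).neg)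
    fun _ => le_rfl
  exact constant_of_monotone_antitone hmono (fun a b hab => neg_le_neg_iff.1 (hanti hab)) x y

theorem stmt_2_general (W : StieltjesFunction ℝ) (hW : StrictMono W)
    (hdense : Dense {x : ℝ | Function.leftLim W x ≠ W x})
    (f g : ℝ → ℝ) (hf : Continuous f)
    (hg : ∀ x : ℝ, Tendsto (fun ε : ℝ => (f (x + ε) - f x) / (W (x + ε) - W x))
        (𝓝[≠] 0) (𝓝 (g x)))
    (hgdiff : Differentiable ℝ g) :
    ∀ x y : ℝ, f x = f y := by
  have hderiv : ∀ x, HasDerivWRTAt W f (g x) x := fun x => hasDerivWRTAt_iff_tendsto_add.2 (hg x)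
  have hg0 : g = 0 := hgdiff.continuous.ext_on hdense continuous_const fun x hx =>
    (hderiv x).eq_zero_of_leftLim_ne W.mono hf.continuousAt hx
  exact eq_of_hasDerivWRTAt_zero hW fun x => by simpa [hg0] using hderiv x

/-- If `W` is strictly increasing càdlàg with a dense set of jump points, `f` is continuous,
the generalized derivative `g = df/dW` exists everywhere, and `g` is differentiable with
continuous derivative, then `f` is constant. -/
theorem stmt_2 (W : StieltjesFunction ℝ) (hW : StrictMono W)
    (hdense : Dense {x : ℝ | Function.leftLim W x ≠ W x})
    (f g : ℝ → ℝ) (hf : Continuous f)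
    (hg : ∀ x : ℝ, Tendsto (fun ε : ℝ => (f (x + ε) - f x) / (W (x + ε) - W x))
        (𝓝[≠] 0) (𝓝 (g x)))
    (hgdiff : Differentiable ℝ g) (hgcont : Continuous (deriv g)) :
    ∀ x y : ℝ, f x = f y :=
  stmt_2_general W hW hdense f g hf hg hgdiff
end
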